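/- Let f : ℝ → ℝ be continuous and c₀ ∈ ℝ. Define φ(t) = arcsin(c₀ · exp(∫₀ᵗ f)). Then on any interval where |c₀ · exp(∫₀ᵗ f)| < 1, φ is differentiable and satisfies φ'(t) = f(t) · tan(φ(t)). -/
import Mathlib


open Real in
theorem fold_angle_ode_solution (f : ℝ → ℝ) (hf : Continuous f) (c₀ : ℝ)
    (φ : ℝ → ℝ)
    (hφ : ∀ t, φ t = Real.arcsin (c₀ * Real.exp (∫ s in (0:ℝ)..t, f s))) :
    ∀ t : ℝ, |c₀ * Real.exp (∫ s in (0:ℝ)..t, f s)| < 1 →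
      HasDerivAt φ (f t * Real.tan (φ t)) t := by
  intro t ht
  set g : ℝ → ℝ := fun u => c₀ * Real.exp (∫ s in (0:ℝ)..u, f s) with hg
  have hI : HasDerivAt (fun u => ∫ s in (0:ℝ)..u, f s) (f t) t :=
    intervalIntegral.integral_hasDerivAt_right (hf.intervalIntegrable _ _)
      (hf.stronglyMeasurableAtFilter _ _) hf.continuousAt
  have hgd : HasDerivAt g (g t * f t) t := by
    have := (hI.exp).const_mul c₀
    simpa [hg, mul_assoc, mul_comm, mul_left_comm] using this
  have ht' : |g t| < 1 := ht
  have h1 : g t ≠ -1 := by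
    intro h; rw [h] at ht'; norm_num at ht'
  have h2 : g t ≠ 1 := by
    intro h; rw [h] at ht'; norm_num at ht'
  have harcsin := (Real.hasDerivAt_arcsin h1 h2).comp t hgd
  have hpos : 0 < Real.sqrt (1 - g t ^ 2) := by
    apply Real.sqrt_pos.mpr
    have := abs_lt.mp ht'
    nlinarith [this.1, this.2]
  have key : (1 / Real.sqrt (1 - g t ^ 2)) * (g t * f t)
      = f t * Real.tan (Real.arcsin (g t)) := by
    rw [Real.tan_arcsin]
    field_simp
  have : HasDerivAt (fun u => Real.arcsin (g u)) (f t * Real.tan (φ t)) t := by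
    rw [hφ t]
    exact key ▸ harcsin
  apply this.congr_of_eventuallyEq
  filter_upwards with u
  rw [hφ u]
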